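/- Let R = k[t₁,t₂]/(t₁² − t₂², t₁t₂) and let L be the free rank-one R-module R with α acting as multiplication by t₁ and δ acting as multiplication by t₂. Then: (i) αδ = δα = 0 and α² = δ² in R, so L is an R ⊗_k Λ₁-module, free over R; (ii) L/(t₁,t₂)L is isomorphic to the simple Λ₁-module S₁ (the one-dimensional module with α = δ = 0); (iii) L/t₁L is isomorphic as a Λ₁-module to M(δ) and L/t₂L is isomorphic as a Λ₁-module to M(α), and M(α) and M(δ) are not isomorphic; here M(α) is the Λ₁-module k² with α(x,y) = (0,x) and δ = 0, and M(δ) is the Λ₁-module k² with δ(x,y) = (0,x) and α = 0. -/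

import Mathlib

set_option synthInstance.maxHeartbeats 1000000
set_option maxHeartbeats 1000000

/-! Common framework: modules over the generalized Brauer star algebra with one
edge, `Λ₁ = k⟨α,δ⟩/(αδ, δα, α² − δ²)`, encoded as a module `V` together with two
endomorphisms `A` (the action of `α`) and `D` (the action of `δ`). -/

namespace GBTAone

structure Mod1 (R : Type) [CommRing R] : Type 1 where
  V : Type
  [instAdd : AddCommGroup V]
  [instMod : Module R V]
  A : Module.End R V
  D : Module.End R V

attribute [instance] Mod1.instAdd Mod1.instMod

variable {R : Type} [CommRing R]

/-- The defining relations of `Λ₁`: `αδ = δα = 0` and `α² = δ²`. -/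
def Satisfies1 (ρ : Mod1 R) : Prop :=
  ρ.A * ρ.D = 0 ∧ ρ.D * ρ.A = 0 ∧ ρ.A * ρ.A = ρ.D * ρ.D

/-- The space of `Λ₁`-module homomorphisms `ρ → σ`. -/
def homSet1 (ρ σ : Mod1 R) : Submodule R (ρ.V →ₗ[R] σ.V) where
  carrier := {f | f ∘ₗ ρ.A = σ.A ∘ₗ f ∧ f ∘ₗ ρ.D = σ.D ∘ₗ f}
  add_mem' := by
    rintro f g ⟨hfa, hfd⟩ ⟨hga, hgd⟩
    exact ⟨by simp only [LinearMap.add_comp, LinearMap.comp_add, hfa, hga],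
      by simp only [LinearMap.add_comp, LinearMap.comp_add, hfd, hgd]⟩
  zero_mem' := ⟨by simp, by simp⟩
  smul_mem' := by
    rintro c f ⟨hfa, hfd⟩
    exact ⟨by simp only [LinearMap.smul_comp, LinearMap.comp_smul, hfa],
      by simp only [LinearMap.smul_comp, LinearMap.comp_smul, hfd]⟩

/-- Projectivity of a `Λ₁`-module, via the lifting property in the category of
`Λ₁`-modules. -/
def IsProjective1 (P : Mod1 R) : Prop :=
  Satisfies1 P ∧
  ∀ (A B : Mod1 R), Satisfies1 A → Satisfies1 B →
    ∀ p ∈ homSet1 A B, Function.Surjective p →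
      ∀ g ∈ homSet1 P B, ∃ h ∈ homSet1 P A, p ∘ₗ h = g

/-- An endomorphism `f` of `ρ` factors through a projective `Λ₁`-module. -/
def FactorsThroughProjective1 (ρ : Mod1 R) (f : ρ.V →ₗ[R] ρ.V) : Prop :=
  ∃ P : Mod1 R, IsProjective1 P ∧ ∃ g ∈ homSet1 ρ P, ∃ h ∈ homSet1 P ρ, f = h ∘ₗ g

/-- "The stable endomorphism ring of `ρ` is isomorphic to the scalars". -/
def StableEndIsoScalars1 (ρ : Mod1 R) : Prop :=
  (¬ FactorsThroughProjective1 ρ LinearMap.id) ∧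
  ∀ f ∈ homSet1 ρ ρ, ∃ c : R, FactorsThroughProjective1 ρ (f - c • LinearMap.id)

/-- The linear map on `Fin m → W` sending the `src` coordinate to the `dst`
coordinate through `g`, and killing all other coordinates. -/
def mk1 {m : ℕ} {W : Type} [AddCommGroup W] [Module R W] (src dst : Fin m)
    (g : W →ₗ[R] W) : (Fin m → W) →ₗ[R] (Fin m → W) where
  toFun x := fun r => if r = dst then g (x src) else 0
  map_add' x y := by funext r; by_cases h : r = dst <;> simp [h]
  map_smul' c x := by funext r; by_cases h : r = dst <;> simp [h]

/-- The map `(x, y) ↦ (0, x)` on `W × W`. -/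
def sh (R W : Type) [CommRing R] [AddCommGroup W] [Module R W] :
    (W × W) →ₗ[R] (W × W) :=
  LinearMap.prod 0 (LinearMap.fst R W W)

/-- The module `M(α)`: `k²` with `α(x,y) = (0,x)` and `δ = 0`. -/
@[reducible] def Malpha (k : Type) [CommRing k] : Mod1 k where
  V := k × k
  A := sh k k
  D := 0

/-- The module `M(δ)`: `k²` with `δ(x,y) = (0,x)` and `α = 0`. -/
@[reducible] def Mdelta (k : Type) [CommRing k] : Mod1 k where
  V := k × k
  A := 0
  D := sh k k

/-- The regular module `Λ₁`, with basis `1, α, δ, α²` (coordinates `0,1,2,3`). -/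
@[reducible] def reg (k : Type) [CommRing k] : Mod1 k where
  V := Fin 4 → k
  A := mk1 0 1 LinearMap.id + mk1 1 3 LinearMap.id
  D := mk1 0 2 LinearMap.id + mk1 2 3 LinearMap.id

/-- The simple `Λ₁`-module `S₁`. -/
@[reducible] def S1 (k : Type) [CommRing k] : Mod1 k where
  V := k
  A := 0
  D := 0


/-- The ideal `(t₁² − t₂², t₁t₂)` of `k[t₁,t₂]`. -/
noncomputable def I18 (k : Type) [Field k] : Ideal (MvPolynomial (Fin 2) k) :=
  Ideal.span {(MvPolynomial.X 0 : MvPolynomial (Fin 2) k) ^ 2 - MvPolynomial.X 1 ^ 2,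
    (MvPolynomial.X 0 : MvPolynomial (Fin 2) k) * MvPolynomial.X 1}

/-- `R = k[t₁,t₂]/(t₁² − t₂², t₁t₂)`. -/
noncomputable abbrev R18 (k : Type) [Field k] : Type :=
  MvPolynomial (Fin 2) k ⧸ I18 k

/-- The class of `t₁` in `R`. -/
noncomputable def t1 (k : Type) [Field k] : R18 k :=
  Ideal.Quotient.mk (I18 k) (MvPolynomial.X 0)

/-- The class of `t₂` in `R`. -/
noncomputable def t2 (k : Type) [Field k] : R18 k :=
  Ideal.Quotient.mk (I18 k) (MvPolynomial.X 1)

/-- The free rank-one `R`-module `L = R` with `α` acting as multiplication by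
`t₁` and `δ` as multiplication by `t₂`. -/
@[reducible] noncomputable def L18 (k : Type) [Field k] : Mod1 (R18 k) where
  V := R18 k
  A := t1 k • 1
  D := t2 k • 1

/-! Every element of `R` can be written as `a + b t₂ + t₁ y` with `a b : k`, since `t₁t₂ = 0` and
`t₂² = t₁²`. The presentation of `R` gives an algebra map `R → k[ε]` with `t₁ ↦ 0`, `t₂ ↦ ε`; by the
normal form it is onto with kernel `t₁R`, so `L/t₁L ≅ k[ε] = k²` with `t₂` acting as
`(x, y) ↦ (0, x)`, which is `M(δ)`, and composing with `k[ε] → k` gives `L/(t₁,t₂)L ≅ S₁`.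
Precomposing with the automorphism of `R` swapping `t₁` and `t₂` gives `L/t₂L ≅ M(α)`.
Finally, a `Λ₁`-map `f : M(α) → M(δ)` satisfies `δ ∘ f = f ∘ δ = 0`, so its image lies in
`ker δ = 0 × k` and `f` is not onto. -/

open MvPolynomial TrivSqZeroExt

section DualNumberCoords

variable (R : Type) [CommRing R]

def dualNumberCoords : DualNumber R ≃ₗ[R] R × R where
  toFun w := (w.fst, w.snd)
  invFun p := inl p.1 + inr p.2
  map_add' _ _ := rfl
  map_smul' _ _ := rfl
  left_inv w := w.inl_fst_add_inr_snd_eq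
  right_inv p := by simp

@[simp]
theorem dualNumberCoords_apply (w : DualNumber R) : dualNumberCoords R w = (w.fst, w.snd) := rfl

variable {R}

theorem exists_addMonoidHom_prod_of_dualNumber {A : Type} [CommRing A] [Algebra R A]
    (ψ : A →ₐ[R] DualNumber R) (hψ : Function.Surjective ψ) {t s : A}
    (hker : ∀ x, ψ x = 0 ↔ ∃ y, x = t * y) (hs : ψ s = DualNumber.eps) :
    ∃ π : A →+ R × R, Function.Surjective π ∧ (∀ x, π x = 0 ↔ ∃ y, x = t * y) ∧
      (∀ (c : R) (x : A), π (algebraMap R A c * x) = c • π x) ∧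
      (∀ x, π (t * x) = 0) ∧ (∀ x, π (s * x) = sh R R (π x)) := by
  have ht : ψ t = 0 := (hker t).mpr ⟨1, (mul_one t).symm⟩
  refine ⟨((dualNumberCoords R).toLinearMap ∘ₗ ψ.toLinearMap).toAddMonoidHom,
    (dualNumberCoords R).surjective.comp hψ, fun x => ?_, fun c x => ?_, fun x => ?_, fun x => ?_⟩
  · exact (dualNumberCoords R).map_eq_zero_iff.trans (hker x)
  · simp [← Algebra.smul_def]
  · simp [ht]
  · simp [hs, sh]

end DualNumberCoords

theorem Malpha_not_iso_Mdelta (k : Type) [CommRing k] [Nontrivial k] :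
    ¬ ∃ f ∈ homSet1 (Malpha k) (Mdelta k), Function.Bijective f := by
  rintro ⟨f, ⟨-, hD⟩, -, hsurj⟩
  obtain ⟨v, hv⟩ := hsurj (1, 0)
  have : sh k k (f v) = 0 := by simpa using (LinearMap.congr_fun hD v).symm
  simp [hv, sh] at this

noncomputable section R18

variable {k : Type} [Field k]

theorem t1_mul_t2 : t1 k * t2 k = 0 := by
  rw [t1, t2, ← map_mul, Ideal.Quotient.eq_zero_iff_mem]
  exact Ideal.subset_span (by simp)

theorem t1_sq_eq_t2_sq : t1 k ^ 2 = t2 k ^ 2 := by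
  rw [t1, t2, ← map_pow, ← map_pow, ← sub_eq_zero, ← map_sub, Ideal.Quotient.eq_zero_iff_mem]
  exact Ideal.subset_span (by simp)

theorem satisfies1_L18 : Satisfies1 (L18 k) := by
  refine ⟨?_, ?_, ?_⟩ <;> refine LinearMap.ext fun x => ?_ <;>
    simp only [Module.End.mul_apply, LinearMap.smul_apply, Module.End.one_apply, smul_eq_mul,
      LinearMap.zero_apply, ← mul_assoc]
  · rw [t1_mul_t2, zero_mul]
  · rw [mul_comm (t2 k), t1_mul_t2, zero_mul]
  · rw [← sq, ← sq, t1_sq_eq_t2_sq]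

section Lift

variable {A : Type} [CommRing A] [Algebra k A]

def liftR18 (u v : A) (huv : u * v = 0) (hsq : u ^ 2 = v ^ 2) : R18 k →ₐ[k] A :=
  Ideal.Quotient.liftₐ (I18 k) (aeval ![u, v]) fun _ hp => RingHom.mem_ker.mp <|
    (Ideal.span_le (I := RingHom.ker (aeval ![u, v])).mpr (by
      rintro q (rfl | rfl) <;> simp [huv, hsq]) : I18 k ≤ _) hp

variable (u v : A) (huv : u * v = 0) (hsq : u ^ 2 = v ^ 2)

@[simp]
theorem liftR18_t1 : liftR18 u v huv hsq (t1 k) = u := by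
  change liftR18 u v huv hsq (Ideal.Quotient.mkₐ k (I18 k) (X 0)) = _
  rw [liftR18, ← AlgHom.comp_apply, Ideal.Quotient.liftₐ_comp]
  simp

@[simp]
theorem liftR18_t2 : liftR18 u v huv hsq (t2 k) = v := by
  change liftR18 u v huv hsq (Ideal.Quotient.mkₐ k (I18 k) (X 1)) = _
  rw [liftR18, ← AlgHom.comp_apply, Ideal.Quotient.liftₐ_comp]
  simp

end Lift

theorem R18.algHom_ext {A : Type} [CommRing A] [Algebra k A] {f g : R18 k →ₐ[k] A}
    (h1 : f (t1 k) = g (t1 k)) (h2 : f (t2 k) = g (t2 k)) : f = g := by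
  refine Ideal.Quotient.algHom_ext _ (MvPolynomial.algHom_ext fun i => ?_)
  fin_cases i
  exacts [h1, h2]

def swapT : R18 k →ₐ[k] R18 k :=
  liftR18 (t2 k) (t1 k) (by rw [mul_comm, t1_mul_t2]) t1_sq_eq_t2_sq.symm

@[simp]
theorem swapT_t1 : swapT (t1 k) = t2 k := liftR18_t1 ..

@[simp]
theorem swapT_t2 : swapT (t2 k) = t1 k := liftR18_t2 ..

@[simp]
theorem swapT_swapT (x : R18 k) : swapT (swapT x) = x := by
  have : swapT.comp swapT = AlgHom.id k (R18 k) := R18.algHom_ext (by simp) (by simp)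
  exact AlgHom.congr_fun this x

theorem swapT_surjective : Function.Surjective (swapT (k := k)) :=
  Function.Involutive.surjective swapT_swapT

theorem exists_eq_algebraMap_add_algebraMap_mul_t2_add_t1_mul (x : R18 k) :
    ∃ (a b : k) (y : R18 k), x = algebraMap k _ a + algebraMap k _ b * t2 k + t1 k * y := by
  obtain ⟨p, rfl⟩ := Ideal.Quotient.mk_surjective x
  induction p using MvPolynomial.induction_on with
  | C a => exact ⟨a, 0, 0, by simp [← Ideal.Quotient.mk_algebraMap]⟩
  | add p q hp hq =>
    obtain ⟨a, b, y, hpy⟩ := hp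
    obtain ⟨a', b', y', hqy⟩ := hq
    exact ⟨a + a', b + b', y + y', by rw [map_add, hpy, hqy]; simp only [map_add]; ring⟩
  | mul_X p n hp =>
    obtain ⟨a, b, y, hpy⟩ := hp
    rw [map_mul, hpy]
    fin_cases n
    · refine ⟨0, 0, algebraMap k _ a + t1 k * y, ?_⟩
      change _ * t1 k = _
      simp only [map_zero]
      linear_combination algebraMap k _ b * t1_mul_t2 (k := k)
    · refine ⟨0, a, algebraMap k _ b * t1 k, ?_⟩
      change _ * t2 k = _
      simp only [map_zero]
      linear_combination algebraMap k _ b * (t1_sq_eq_t2_sq (k := k)).symm + y * t1_mul_t2 (k := k)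

def toDualNumber : R18 k →ₐ[k] DualNumber k :=
  liftR18 0 DualNumber.eps (zero_mul _) (by simp [DualNumber.eps_pow_two])

@[simp]
theorem toDualNumber_t1 : toDualNumber (t1 k) = 0 := liftR18_t1 ..

@[simp]
theorem toDualNumber_t2 : toDualNumber (t2 k) = DualNumber.eps := liftR18_t2 ..

theorem toDualNumber_algebraMap_add_mul_t2 (a b : k) :
    toDualNumber (algebraMap k _ a + algebraMap k _ b * t2 k) = inl a + inr b := by
  ext <;> simp [algebraMap_eq_inl]

theorem toDualNumber_surjective : Function.Surjective (toDualNumber (k := k)) := fun w =>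
  ⟨_, (toDualNumber_algebraMap_add_mul_t2 w.fst w.snd).trans w.inl_fst_add_inr_snd_eq⟩

theorem toDualNumber_eq_zero_iff (x : R18 k) : toDualNumber x = 0 ↔ ∃ y, x = t1 k * y := by
  refine ⟨fun hx => ?_, by rintro ⟨y, rfl⟩; simp⟩
  obtain ⟨a, b, y, rfl⟩ := exists_eq_algebraMap_add_algebraMap_mul_t2_add_t1_mul x
  rw [map_add, map_mul, toDualNumber_t1, zero_mul, add_zero,
    toDualNumber_algebraMap_add_mul_t2] at hx
  obtain ⟨rfl, rfl⟩ : a = 0 ∧ b = 0 :=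
    ⟨by simpa using congrArg fst hx, by simpa using congrArg snd hx⟩
  exact ⟨y, by simp⟩

theorem fst_toDualNumber_eq_zero_iff (x : R18 k) :
    (toDualNumber x).fst = 0 ↔ ∃ y z, x = t1 k * y + t2 k * z := by
  refine ⟨fun hx => ?_, by rintro ⟨y, z, rfl⟩; simp⟩
  obtain ⟨a, b, y, rfl⟩ := exists_eq_algebraMap_add_algebraMap_mul_t2_add_t1_mul x
  rw [map_add, map_mul, toDualNumber_t1, zero_mul, add_zero,
    toDualNumber_algebraMap_add_mul_t2] at hx
  obtain rfl : a = 0 := by simpa using hx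
  exact ⟨y, algebraMap k _ b, by simp [add_comm, mul_comm]⟩

theorem toDualNumber_swapT_eq_zero_iff (x : R18 k) :
    toDualNumber (swapT x) = 0 ↔ ∃ y, x = t2 k * y := by
  rw [toDualNumber_eq_zero_iff]
  constructor
  · rintro ⟨y, hy⟩
    exact ⟨swapT y, by rw [← swapT_swapT x, hy, map_mul, swapT_t1]⟩
  · rintro ⟨y, rfl⟩
    exact ⟨swapT y, by simp⟩

end R18

/-- In `R = k[t₁,t₂]/(t₁² − t₂², t₁t₂)` the relations of `Λ₁`
hold, so `L = R` (with `α = t₁`, `δ = t₂`) is an `R ⊗ Λ₁`-module, free over `R`;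
`L/(t₁,t₂)L ≅ S₁`; `L/t₁L ≅ M(δ)` and `L/t₂L ≅ M(α)` as `Λ₁`-modules; and
`M(α)` and `M(δ)` are not isomorphic. -/
theorem L18_properties (k : Type) [Field k] :
    (Satisfies1 (L18 k) ∧ Module.Free (R18 k) (L18 k).V) ∧
    (∃ π : (L18 k).V →+ k, Function.Surjective π ∧
      (∀ x, π x = 0 ↔ ∃ y z, x = t1 k * y + t2 k * z) ∧
      (∀ (c : k) (x : (L18 k).V), π (algebraMap k (R18 k) c * x) = c * π x) ∧
      (∀ x, π ((L18 k).A x) = 0) ∧ (∀ x, π ((L18 k).D x) = 0)) ∧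
    ((∃ π : (L18 k).V →+ (Mdelta k).V, Function.Surjective π ∧
        (∀ x, π x = 0 ↔ ∃ y, x = t1 k * y) ∧
        (∀ (c : k) (x : (L18 k).V), π (algebraMap k (R18 k) c * x) = c • π x) ∧
        (∀ x, π ((L18 k).A x) = (Mdelta k).A (π x)) ∧
        (∀ x, π ((L18 k).D x) = (Mdelta k).D (π x))) ∧
      (∃ π : (L18 k).V →+ (Malpha k).V, Function.Surjective π ∧
        (∀ x, π x = 0 ↔ ∃ y, x = t2 k * y) ∧
        (∀ (c : k) (x : (L18 k).V), π (algebraMap k (R18 k) c * x) = c • π x) ∧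
        (∀ x, π ((L18 k).A x) = (Malpha k).A (π x)) ∧
        (∀ x, π ((L18 k).D x) = (Malpha k).D (π x))) ∧
      ¬ ∃ f ∈ homSet1 (Malpha k) (Mdelta k), Function.Bijective f) := by
  refine ⟨⟨satisfies1_L18, inferInstance⟩, ?_, ?_, ?_, Malpha_not_iso_Mdelta k⟩
  · let ε₀ : R18 k →ₐ[k] k := (fstHom k k k).comp toDualNumber
    exact ⟨ε₀, fun c => ⟨algebraMap k _ c, ε₀.commutes c⟩, fst_toDualNumber_eq_zero_iff,
      fun c x => by simp [ε₀, algebraMap_eq_inl], fun x => by simp [ε₀], fun x => by simp [ε₀]⟩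
  · obtain ⟨π, hsurj, hker, hsmul, ht, hs⟩ := exists_addMonoidHom_prod_of_dualNumber
      (toDualNumber (k := k)) toDualNumber_surjective toDualNumber_eq_zero_iff toDualNumber_t2
    exact ⟨π, hsurj, hker, hsmul, fun x => by simpa using ht x, fun x => by simpa using hs x⟩
  · obtain ⟨π, hsurj, hker, hsmul, ht, hs⟩ := exists_addMonoidHom_prod_of_dualNumber
      (toDualNumber.comp swapT) (toDualNumber_surjective.comp swapT_surjective)
      toDualNumber_swapT_eq_zero_iff (s := t1 k) (by simp)
    exact ⟨π, hsurj, hker, hsmul, fun x => by simpa using hs x, fun x => by simpa using ht x⟩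

end GBTAone
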